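/- Every instance of the stable roommates problem in which the preference structure is derived from a symmetric distance function with all pairwise distances distinct admits a stable matching: given 2R agents and a symmetric function d with d(a,b) = d(b,a) and all values {d(a,b) : a ≠ b} pairwise distinct, where each agent ranks others by increasing d, there exists a perfect matching M such that no two unmatched agents a, b both strictly prefer each other to their partners in M (i.e., no blocking pair exists). In fact, iteratively matching the globally closest unmatched pair yields such a stable matching. -/
import Mathlib

universe u

theorem stmt15_aux : ∀ (R : ℕ) (V : Type u) [Fintype V] [DecidableEq V],
    Fintype.card V = 2 * R → ∀ (d : V → V → ℝ),
    (∀ a b : V, d a b = d b a) →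
    (∀ a b c e : V, a ≠ b → c ≠ e → d a b = d c e →
      (a = c ∧ b = e) ∨ (a = e ∧ b = c)) →
    ∃ M : V → V, (∀ a, M (M a) = a) ∧ (∀ a, M a ≠ a) ∧
      ¬ ∃ a b : V, a ≠ b ∧ M a ≠ b ∧ d a b < d a (M a) ∧ d a b < d b (M b) := by
  intro R
  induction R with
  | zero =>
    intro V _ _ hcard d _ _
    have hE : IsEmpty V := Fintype.card_eq_zero_iff.mp (by simpa using hcard)
    exact ⟨id, fun a => (hE.false a).elim, fun a => (hE.false a).elim,
      fun ⟨a, _⟩ => hE.false a⟩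
  | succ R ih =>
    intro V _ _ hcard d hsymm hdist
    -- pick the globally closest pair
    have h2 : 1 < Fintype.card V := by omega
    obtain ⟨a0, b0, hab0⟩ := Fintype.exists_pair_of_one_lt_card h2
    have hne : (Finset.univ.offDiag (α := V)).Nonempty :=
      ⟨(a0, b0), by simp [Finset.mem_offDiag, hab0]⟩
    obtain ⟨p, hp, hpmin⟩ := Finset.exists_min_image _ (fun p => d p.1 p.2) hne
    set a := p.1
    set b := p.2
    have hab : a ≠ b := (Finset.mem_offDiag.mp hp).2.2
    have hmin : ∀ x y : V, x ≠ y → d a b ≤ d x y := by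
      intro x y hxy
      exact hpmin (x, y) (by simp [Finset.mem_offDiag, hxy])
    -- the remaining agents
    set V' := {x : V // x ≠ a ∧ x ≠ b} with hV'
    have hcard' : Fintype.card V' = 2 * R := by
      have h1 : Finset.filter (fun x => x ≠ a ∧ x ≠ b) Finset.univ
          = (Finset.univ : Finset V) \ {a, b} := by
        ext x; simp [not_or, and_comm]
      have h2' : Fintype.card V' = (Finset.univ \ ({a, b} : Finset V)).card := by
        rw [Fintype.card_subtype, h1]
      have h3 : ({a, b} : Finset V).card = 2 := by
        rw [Finset.card_insert_of_notMem (by simpa using hab)]; simp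
      rw [h2', Finset.card_sdiff_of_subset (Finset.subset_univ _), h3,
        Finset.card_univ, hcard]
      omega
    obtain ⟨M', hM'1, hM'2, hM'3⟩ := ih V' hcard' (fun x y => d x.1 y.1)
      (fun x y => hsymm x.1 y.1)
      (by
        intro x y z w hxy hzw h
        have := hdist x.1 y.1 z.1 w.1 (fun h => hxy (Subtype.ext h))
          (fun h => hzw (Subtype.ext h)) h
        rcases this with ⟨h1, h2⟩ | ⟨h1, h2⟩
        · exact Or.inl ⟨Subtype.ext h1, Subtype.ext h2⟩
        · exact Or.inr ⟨Subtype.ext h1, Subtype.ext h2⟩)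
    -- define the matching
    refine ⟨fun x => if hxa : x = a then b else if hxb : x = b then a
        else (M' ⟨x, hxa, hxb⟩).1, ?_, ?_, ?_⟩
    · intro x
      by_cases hxa : x = a
      · subst hxa; simp [hab, Ne.symm hab]
      · by_cases hxb : x = b
        · subst hxb; simp [hab, Ne.symm hab]
        · have h1 : (M' ⟨x, hxa, hxb⟩).1 ≠ a := (M' ⟨x, hxa, hxb⟩).2.1
          have h2 : (M' ⟨x, hxa, hxb⟩).1 ≠ b := (M' ⟨x, hxa, hxb⟩).2.2
          simp only [dif_neg hxa, dif_neg hxb, dif_neg h1, dif_neg h2]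
          have := hM'1 ⟨x, hxa, hxb⟩
          exact congrArg Subtype.val this
    · intro x
      by_cases hxa : x = a
      · subst hxa; simpa using Ne.symm hab
      · by_cases hxb : x = b
        · subst hxb; simpa [hxa] using hab
        · simp only [dif_neg hxa, dif_neg hxb]
          intro h
          exact hM'2 ⟨x, hxa, hxb⟩ (Subtype.ext h)
    · rintro ⟨x, y, hxy, hMxy, h1, h2⟩
      by_cases hxa : x = a
      · subst hxa
        simp only [dif_pos rfl] at h1
        exact absurd h1 (not_lt.mpr (hmin a y hxy))
      · by_cases hxb : x = b
        · subst hxb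
          simp only [dif_neg hxa, dif_pos rfl, dite_true] at h1
          rw [hsymm b a] at h1
          exact absurd h1 (not_lt.mpr (hmin b y hxy))
        · by_cases hya : y = a
          · subst hya
            simp only [dif_pos rfl] at h2
            exact absurd h2 (not_lt.mpr (hmin x a hxy))
          · by_cases hyb : y = b
            · subst hyb
              simp only [dif_neg hya, dif_pos rfl, dite_true] at h2
              rw [hsymm b a] at h2
              exact absurd h2 (not_lt.mpr (hmin x b hxy))
            · apply hM'3
              refine ⟨⟨x, hxa, hxb⟩, ⟨y, hya, hyb⟩,
                fun h => hxy (congrArg Subtype.val h), ?_, ?_, ?_⟩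
              · intro h
                apply hMxy
                simp only [dif_neg hxa, dif_neg hxb]
                exact congrArg Subtype.val h
              · simpa only [dif_neg hxa, dif_neg hxb] using h1
              · simpa only [dif_neg hya, dif_neg hyb] using h2

/-- Every stable-roommates instance whose preferences come from a symmetric
distance function with pairwise distinct values admits a stable matching. -/
theorem stmt15 (V : Type*) [Fintype V] [DecidableEq V] (R : ℕ)
    (hcard : Fintype.card V = 2 * R) (d : V → V → ℝ)
    (hsymm : ∀ a b : V, d a b = d b a)
    (hdist : ∀ a b c e : V, a ≠ b → c ≠ e → d a b = d c e →
      (a = c ∧ b = e) ∨ (a = e ∧ b = c)) :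
    ∃ M : V → V, (∀ a, M (M a) = a) ∧ (∀ a, M a ≠ a) ∧
      ¬ ∃ a b : V, a ≠ b ∧ M a ≠ b ∧ d a b < d a (M a) ∧ d a b < d b (M b) := by
  exact stmt15_aux R V hcard d hsymm hdist
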